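/- arXiv:1602.00175 — 3 statements merged into one kernel-verified Lean document; each statement's English description precedes it below -/
import Mathlib

section
/- Let η be a Poisson random variable with parameter 1 and ξ = η − 1. Then the L^p norms satisfy |ξ|_p = (E|ξ|^p)^{1/p} ~ p/(e · ln p) as p → ∞, i.e., the ratio |ξ|_p · (e ln p)/p tends to 1. -/
/-! The upper bound is of Chernoff type: `x ^ p ≤ (p / (e t)) ^ p * exp (t x)` for `x ≥ 0`
(the function `x ^ p * exp (-t x)` peaks at `x = p / t`), so
`E|ξ|^p ≤ (p / (e t)) ^ p e^t E e^{tη}`, and the Poisson moment generating function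
`E e^{tη} = exp (e^t - 1)` gives `‖ξ‖_p ≤ p / (e t) * exp ((t + e^t - 1) / p)`. Taking
`e^t = p / (log p)^2` makes this `p / (e log p) * (1 + o(1))`. For the lower bound, keep only the
term `k = ⌈p / log p⌉` of `E|ξ|^p = ∑ e⁻¹ |k - 1|^p / k!` and use `k! ≤ k^k ≤ e^{p + log p}`. -/

open MeasureTheory ProbabilityTheory Filter

/-- The real-valued `L^p` norm `(E|f|^p)^{1/p}` for real exponent `p`. -/
noncomputable def lpNorm {Ω : Type*} [MeasurableSpace Ω] (μ : Measure Ω)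
    (f : Ω → ℝ) (p : ℝ) : ℝ := (∫ ω, |f ω| ^ p ∂μ) ^ (1 / p)

open Real
open scoped Nat NNReal Topology

theorem Real.rpow_le_div_rpow_mul_exp {x p t : ℝ} (hx : 0 ≤ x) (hp : 0 < p) (ht : 0 < t) :
    x ^ p ≤ (p / (exp 1 * t)) ^ p * exp (t * x) := by
  set y := t * x / p
  have hey : exp 1 * y ≤ exp y := by
    have := add_one_le_exp (y - 1)
    rw [sub_add_cancel, exp_sub] at this
    rwa [le_div_iff₀ (exp_pos 1), mul_comm] at this
  have hxy : x = p / (exp 1 * t) * (exp 1 * y) := by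
    simp only [y]; field_simp
  calc x ^ p = (p / (exp 1 * t)) ^ p * (exp 1 * y) ^ p := by
        rw [hxy, mul_rpow (by positivity) (by positivity)]
    _ ≤ (p / (exp 1 * t)) ^ p * (exp y) ^ p := by gcongr
    _ = (p / (exp 1 * t)) ^ p * exp (t * x) := by
        rw [← exp_mul]; simp only [y]; field_simp

theorem integrable_exp_mul_poissonMeasure (r : ℝ≥0) (t : ℝ) :
    Integrable (fun n : ℕ => exp (t * n)) (poissonMeasure r) := by
  refine integrable_poissonMeasure_iff.2 ?_
  refine ((summable_pow_div_factorial (r * exp t)).mul_left (exp (-r))).congr fun n => ?_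
  rw [norm_of_nonneg (exp_pos _).le, mul_pow, ← exp_nat_mul, mul_comm (n : ℝ) t]
  ring

theorem mgf_poissonMeasure (r : ℝ≥0) (t : ℝ) :
    mgf (fun n : ℕ => (n : ℝ)) (poissonMeasure r) t = exp (r * (exp t - 1)) := by
  rw [mgf, integral_poissonMeasure]
  have hterm (n : ℕ) :
      (exp (-r) * r ^ n / n !) • exp (t * n) = exp (-r) * ((r * exp t) ^ n / n !) := by
    rw [smul_eq_mul, mul_pow, ← exp_nat_mul, mul_comm (n : ℝ) t]
    ring
  rw [tsum_congr hterm, tsum_mul_left,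
    (NormedSpace.expSeries_div_hasSum_exp (r * exp t : ℝ)).tsum_eq, ← exp_eq_exp_ℝ, ← exp_add]
  ring_nf

noncomputable def centeredPoissonAbsMoment (p : ℝ) : ℝ :=
  ∫ n, |(n : ℝ) - 1| ^ p ∂poissonMeasure 1

theorem centeredPoissonAbsMoment_nonneg (p : ℝ) : 0 ≤ centeredPoissonAbsMoment p :=
  integral_nonneg fun _ => by positivity

section
variable {p : ℝ}

theorem abs_natCast_sub_one_rpow_le (hp : 0 < p) {t : ℝ} (ht : 0 < t) (n : ℕ) :
    |(n : ℝ) - 1| ^ p ≤ (p / (exp 1 * t)) ^ p * exp t * exp (t * n) := by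
  calc |(n : ℝ) - 1| ^ p ≤ (p / (exp 1 * t)) ^ p * exp (t * |(n : ℝ) - 1|) :=
        rpow_le_div_rpow_mul_exp (abs_nonneg _) hp ht
    _ ≤ (p / (exp 1 * t)) ^ p * exp (t * (n + 1)) := by
        gcongr
        rw [abs_le]
        constructor <;> linarith [(n.cast_nonneg : (0 : ℝ) ≤ n)]
    _ = (p / (exp 1 * t)) ^ p * exp t * exp (t * n) := by
        rw [mul_add_one, exp_add, mul_comm (exp _) (exp t), mul_assoc]

theorem centeredPoissonAbsMoment_le (hp : 0 < p) {t : ℝ} (ht : 0 < t) :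
    centeredPoissonAbsMoment p ≤ (p / (exp 1 * t)) ^ p * exp (t + (exp t - 1)) := by
  calc centeredPoissonAbsMoment p
      ≤ ∫ n : ℕ, (p / (exp 1 * t)) ^ p * exp t * exp (t * n) ∂poissonMeasure 1 :=
        integral_mono_of_nonneg (.of_forall fun n => by positivity)
          ((integrable_exp_mul_poissonMeasure 1 t).const_mul _)
          (.of_forall (abs_natCast_sub_one_rpow_le hp ht))
    _ = (p / (exp 1 * t)) ^ p * exp (t + (exp t - 1)) := by
        rw [integral_const_mul, ← mgf, mgf_poissonMeasure, NNReal.coe_one, one_mul, exp_add,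
          mul_assoc]

theorem integrable_abs_natCast_sub_one_rpow (hp : 0 < p) :
    Integrable (fun n : ℕ => |(n : ℝ) - 1| ^ p) (poissonMeasure 1) :=
  ((integrable_exp_mul_poissonMeasure 1 1).const_mul _).mono' .of_discrete
    (.of_forall fun n => by
      rw [norm_of_nonneg (by positivity)]
      exact abs_natCast_sub_one_rpow_le hp one_pos n)

theorem exp_neg_mul_rpow_le_centeredPoissonAbsMoment (hp : 0 < p) {k : ℕ} (hk : 1 ≤ k) :
    exp (-(1 + k * log k)) * ((k : ℝ) - 1) ^ p ≤ centeredPoissonAbsMoment p := by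
  have hk1 : (1 : ℝ) ≤ k := by exact_mod_cast hk
  have hk0 : (0 : ℝ) < k := by linarith
  have hfact : (k ! : ℝ) ≤ exp (k * log k) := by
    rw [← log_rpow hk0, exp_log (by positivity), rpow_natCast]
    exact_mod_cast k.factorial_le_pow
  calc exp (-(1 + k * log k)) * ((k : ℝ) - 1) ^ p
      ≤ (poissonMeasure 1).real {k} * |(k : ℝ) - 1| ^ p := by
        rw [poissonMeasure_real_singleton, abs_of_nonneg (sub_nonneg.2 hk1),
          neg_add, exp_add, NNReal.coe_one, one_pow, mul_one, exp_neg (k * log k),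
          ← div_eq_mul_inv]
        gcongr
    _ = ∫ n in {k}, |(n : ℝ) - 1| ^ p ∂poissonMeasure 1 := by
        rw [integral_singleton, smul_eq_mul]
    _ ≤ centeredPoissonAbsMoment p :=
        setIntegral_le_integral (integrable_abs_natCast_sub_one_rpow hp)
          (.of_forall fun n => by positivity)

theorem centeredPoissonAbsMoment_rpow_le (hp : 0 < p) {t : ℝ} (ht : 0 < t) :
    centeredPoissonAbsMoment p ^ (1 / p) ≤ p / (exp 1 * t) * exp ((t + (exp t - 1)) / p) := by
  calc centeredPoissonAbsMoment p ^ (1 / p)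
      ≤ ((p / (exp 1 * t)) ^ p * exp (t + (exp t - 1))) ^ (1 / p) := by
        gcongr
        · exact centeredPoissonAbsMoment_nonneg p
        · exact centeredPoissonAbsMoment_le hp ht
    _ = p / (exp 1 * t) * exp ((t + (exp t - 1)) / p) := by
        rw [mul_rpow (by positivity) (by positivity), ← rpow_mul (by positivity),
          mul_one_div_cancel hp.ne', rpow_one, ← exp_mul, mul_one_div]

theorem exp_mul_le_centeredPoissonAbsMoment_rpow (hp : 0 < p) {k : ℕ} (hk : 1 ≤ k) :
    exp (-(1 + k * log k) / p) * ((k : ℝ) - 1) ≤ centeredPoissonAbsMoment p ^ (1 / p) := by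
  have hk1 : (0 : ℝ) ≤ k - 1 := sub_nonneg.2 (by exact_mod_cast hk)
  calc exp (-(1 + k * log k) / p) * ((k : ℝ) - 1)
      = (exp (-(1 + k * log k)) * ((k : ℝ) - 1) ^ p) ^ (1 / p) := by
        rw [mul_rpow (by positivity) (by positivity), ← rpow_mul hk1,
          mul_one_div_cancel hp.ne', rpow_one, ← exp_mul, mul_one_div]
    _ ≤ centeredPoissonAbsMoment p ^ (1 / p) := by
        gcongr
        exact exp_neg_mul_rpow_le_centeredPoissonAbsMoment hp hk
end

theorem Real.tendsto_log_div_self_atTop : Tendsto (fun x => log x / x) atTop (𝓝 0) := by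
  simpa using tendsto_pow_log_div_mul_add_atTop 1 0 1 one_ne_zero

theorem Real.eventually_two_mul_log_lt_self : ∀ᶠ x in atTop, 2 * log x < x := by
  filter_upwards [tendsto_log_div_self_atTop.eventually_lt_const one_half_pos,
    eventually_gt_atTop 0] with x hx hx0
  rw [div_lt_iff₀ hx0] at hx
  linarith

theorem eventually_le_centeredPoissonAbsMoment_rpow_mul_log_div :
    ∀ᶠ p in atTop, exp (-(1 + log p) / p) * (1 - log p / p) ≤
      centeredPoissonAbsMoment p ^ (1 / p) * (exp 1 * log p) / p := by
  filter_upwards [tendsto_log_atTop.eventually_ge_atTop 2, eventually_ge_atTop 2] with p hℓ hp2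
  set ℓ := log p
  have hp : 0 < p := by linarith
  have hℓ0 : 0 < ℓ := by linarith
  set k := ⌈p / ℓ⌉₊
  have hk_lb : p ≤ k * ℓ := (div_le_iff₀ hℓ0).1 (Nat.le_ceil _)
  have hk_ub : (k : ℝ) < p / ℓ + 1 := Nat.ceil_lt_add_one (by positivity)
  have hk : 1 ≤ k := Nat.ceil_pos.2 (by positivity)
  have hk1 : (1 : ℝ) ≤ k := by exact_mod_cast hk
  have hkp : (k : ℝ) ≤ p := by
    have : p / ℓ ≤ p / 2 := div_le_div_of_nonneg_left hp.le two_pos hℓ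
    linarith
  have hklog : k * log k ≤ p + ℓ :=
    calc k * log k ≤ (p / ℓ + 1) * ℓ :=
          mul_le_mul hk_ub.le (log_le_log (by linarith) hkp) (log_nonneg hk1) (by positivity)
      _ = p + ℓ := by field_simp
  have hexp : exp (-(1 + ℓ) / p) = exp (-(1 + (p + ℓ)) / p) * exp 1 := by
    rw [← exp_add]; congr 1; field_simp; ring
  calc exp (-(1 + ℓ) / p) * (1 - ℓ / p)
      ≤ exp (-(1 + ℓ) / p) * ((k - 1) * ℓ / p) := by
        gcongr
        rw [le_div_iff₀ hp, one_sub_mul, div_mul_cancel₀ _ hp.ne']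
        linarith
    _ = exp (-(1 + (p + ℓ)) / p) * (k - 1) * (exp 1 * ℓ) / p := by
        rw [hexp]; ring
    _ ≤ exp (-(1 + k * log k) / p) * (k - 1) * (exp 1 * ℓ) / p := by
        gcongr
    _ ≤ centeredPoissonAbsMoment p ^ (1 / p) * (exp 1 * ℓ) / p := by
        gcongr
        exact exp_mul_le_centeredPoissonAbsMoment_rpow hp hk

theorem eventually_centeredPoissonAbsMoment_rpow_mul_log_div_le :
    ∀ᶠ p in atTop, centeredPoissonAbsMoment p ^ (1 / p) * (exp 1 * log p) / p ≤
      log p / (log p - 2 * log (log p)) * exp (log p / p + 1 / log p ^ 2) := by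
  filter_upwards [tendsto_log_atTop.eventually_ge_atTop 1,
    tendsto_log_atTop.eventually eventually_two_mul_log_lt_self, eventually_gt_atTop 0]
    with p hℓ hℓℓ hp
  set ℓ := log p
  set t := ℓ - 2 * log ℓ
  have ht : 0 < t := sub_pos.2 hℓℓ
  have hexpt : exp t = p / ℓ ^ 2 := by
    rw [exp_sub, exp_log hp, show 2 * log ℓ = log (ℓ ^ 2) by rw [log_pow]; norm_num,
      exp_log (by positivity)]
  calc centeredPoissonAbsMoment p ^ (1 / p) * (exp 1 * ℓ) / p
      ≤ p / (exp 1 * t) * exp ((t + (exp t - 1)) / p) * (exp 1 * ℓ) / p := by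
        gcongr
        exact centeredPoissonAbsMoment_rpow_le hp ht
    _ = ℓ / t * exp ((t - 1) / p + 1 / ℓ ^ 2) := by
        rw [hexpt, show (t + (p / ℓ ^ 2 - 1)) / p = (t - 1) / p + 1 / ℓ ^ 2 by field_simp; ring]
        field_simp
    _ ≤ ℓ / t * exp (ℓ / p + 1 / ℓ ^ 2) := by
        have := log_nonneg hℓ
        gcongr
        linarith

theorem tendsto_exp_neg_one_add_log_div_mul_one_sub_log_div :
    Tendsto (fun p => exp (-(1 + log p) / p) * (1 - log p / p)) atTop (𝓝 1) := by
  have h : Tendsto (fun p => -(1 + log p) / p) atTop (𝓝 0) := by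
    have := (tendsto_inv_atTop_zero.add tendsto_log_div_self_atTop).neg
    simp only [add_zero, neg_zero] at this
    refine this.congr fun p => ?_
    ring
  simpa using ((continuous_exp.tendsto 0).comp h).mul
    (tendsto_const_nhds.sub tendsto_log_div_self_atTop)

theorem tendsto_log_div_log_sub_mul_exp :
    Tendsto (fun p => log p / (log p - 2 * log (log p)) * exp (log p / p + 1 / log p ^ 2))
      atTop (𝓝 1) := by
  have hfrac : Tendsto (fun x => x / (x - 2 * log x)) atTop (𝓝 1) := by
    have := ((tendsto_const_nhds (x := (1 : ℝ))).sub
      (tendsto_log_div_self_atTop.const_mul 2)).inv₀ (by norm_num)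
    rw [mul_zero, sub_zero, inv_one] at this
    refine this.congr' ?_
    filter_upwards [eventually_gt_atTop 0] with x hx
    rw [show 1 - 2 * (log x / x) = (x - 2 * log x) / x by field_simp, inv_div]
  have hexp : Tendsto (fun p => log p / p + 1 / log p ^ 2) atTop (𝓝 0) := by
    have := ((tendsto_pow_atTop two_ne_zero).comp tendsto_log_atTop).inv_tendsto_atTop
    simpa [one_div] using tendsto_log_div_self_atTop.add this
  simpa using (hfrac.comp tendsto_log_atTop).mul ((continuous_exp.tendsto 0).comp hexp)

theorem tendsto_centeredPoissonAbsMoment_rpow_mul_log_div :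
    Tendsto (fun p => centeredPoissonAbsMoment p ^ (1 / p) * (exp 1 * log p) / p) atTop (𝓝 1) :=
  tendsto_of_tendsto_of_tendsto_of_le_of_le'
    tendsto_exp_neg_one_add_log_div_mul_one_sub_log_div tendsto_log_div_log_sub_mul_exp
    eventually_le_centeredPoissonAbsMoment_rpow_mul_log_div
    eventually_centeredPoissonAbsMoment_rpow_mul_log_div_le

theorem centered_poisson_lp_asymptotics_general
    {Ω : Type*} [MeasurableSpace Ω] (μ : Measure Ω)
    (η : Ω → ℕ) (hη : Measurable η)
    (hdist : μ.map η = poissonMeasure 1)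
    (ξ : Ω → ℝ) (hξ : ξ = fun ω => (η ω : ℝ) - 1) :
    Tendsto (fun p : ℝ => lpNorm μ ξ p * (Real.exp 1 * Real.log p) / p)
      atTop (nhds 1) := by
  have hmoment (p : ℝ) : ∫ ω, |ξ ω| ^ p ∂μ = centeredPoissonAbsMoment p := by
    rw [centeredPoissonAbsMoment, ← hdist, integral_map hη.aemeasurable .of_discrete, hξ]
  simpa only [_root_.lpNorm, hmoment] using tendsto_centeredPoissonAbsMoment_rpow_mul_log_div

theorem centered_poisson_lp_asymptotics
    {Ω : Type*} [MeasurableSpace Ω] (μ : Measure Ω) [IsProbabilityMeasure μ]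
    (η : Ω → ℕ) (hη : Measurable η)
    (hdist : μ.map η = poissonMeasure 1)
    (ξ : Ω → ℝ) (hξ : ξ = fun ω => (η ω : ℝ) - 1) :
    Tendsto (fun p : ℝ => lpNorm μ ξ p * (Real.exp 1 * Real.log p) / p)
      atTop (nhds 1) :=
  centered_poisson_lp_asymptotics_general μ η hη hdist ξ hξ
end

section
/- Conversely, let ξ be a random variable with T_ξ(x) ≤ exp(−C₂ x^m (ln x)^{−mr}) for all x > e, where C₂ > 0, m > 0, r ∈ ℝ. Then there is C₁ = C₁(C₂, m, r) > 0 with |ξ|_p ≤ C₁ p^{1/m} (ln p)^r for all p ≥ 2. -/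
/-!
Write `φ(t) = C₂ t^m (log t)^(-mr)`. The hypothesis gives `P(|ξ| > t) ≤ 2 e^(-φ(t))` for `t > e`,
and the layer-cake formula `E|ξ|^p = p ∫ t^(p-1) P(|ξ| > t) dt` reduces the theorem to the uniform
estimate `t^p e^(-φ(t)/2) ≤ D_p^p` for `t > 1`, `p ≥ 2`, where `D_p = K p^(1/m) (log p)^r`. Used at
`p` and at `2`, it bounds the integrand on `(e, ∞)` by `const · D_p^p · t^(-3)`, so that
`E|ξ|^p ≤ e^p + const · p · D_p^p`; the factor `p ≤ 2^p` disappears in the `p`-th root.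

The estimate is proved in logarithmic coordinates `u = log t`, `ℓ = log p`. After adding a constant,
the scale `L = log (p^(1/m) ℓ^r) = ℓ/m + r log ℓ` is comparable to `ℓ`, and `e^(mL)` is
`p ℓ^(mr)` up to a constant. Below `L` there is nothing to prove; for `u = L + v` the penalty
`φ(t)/2` is `p e^(mv) (ℓ/u)^(mr)` up to a constant, with `(ℓ/u)^(mr) ≥ γ (1+v)^(-|mr|)`, and this
beats the gain `p v` up to an additive constant.
-/

open MeasureTheory

/-- The tail function `T_ξ(x) = max(P(ξ > x), P(ξ < -x))`. -/
noncomputable def tailFun {Ω : Type*} [MeasurableSpace Ω] (μ : Measure Ω)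
    (ξ : Ω → ℝ) (x : ℝ) : ℝ :=
  max (μ {ω | x < ξ ω}).toReal (μ {ω | ξ ω < -x}).toReal

open Real Set Filter
open scoped ENNReal

lemma exists_abs_log_le_add_mul {b c : ℝ} (hb : 0 < b) (hc : 0 < c) :
    ∃ A, ∀ x, c ≤ x → |log x| ≤ A + b * x := by
  refine ⟨|log c| + |log b|, fun x hx => ?_⟩
  have hlow : log c ≤ log x := log_le_log hc hx
  have hbx : 0 < b * x := mul_pos hb (hc.trans_le hx)
  have hup : log (b * x) ≤ b * x - 1 := log_le_sub_one_of_pos hbx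
  rw [log_mul hb.ne' (hc.trans_le hx).ne'] at hup
  rw [abs_le]
  constructor <;>
    linarith [neg_abs_le (log c), abs_nonneg (log c), abs_nonneg (log b), neg_abs_le (log b)]

lemma exists_add_div_add_mul_log_mem_Icc {m c : ℝ} (hm : 0 < m) (hc : 0 < c) (r : ℝ) :
    ∃ κ β, 0 < β ∧ ∀ ℓ, c ≤ ℓ → κ + (ℓ / m + r * log ℓ) ∈ Icc (ℓ / (2 * m)) (β * ℓ) := by
  obtain ⟨A, hA⟩ := exists_abs_log_le_add_mul (b := 1 / (2 * m * (|r| + 1))) (by positivity) hc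
  refine ⟨|r| * A, 2 * |(|r| * A)| / c + 3 / (2 * m), by positivity, fun ℓ hℓ => ?_⟩
  have hℓ0 : 0 < ℓ := hc.trans_le hℓ
  have hrlog : |r * log ℓ| ≤ |r| * A + ℓ / (2 * m) := by
    have hcoef : |r| * (1 / (2 * m * (|r| + 1))) ≤ 1 / (2 * m) := by
      rw [mul_one_div, div_le_div_iff₀ (by positivity) (by positivity)]
      nlinarith [abs_nonneg r]
    calc |r * log ℓ| = |r| * |log ℓ| := abs_mul _ _
      _ ≤ |r| * (A + 1 / (2 * m * (|r| + 1)) * ℓ) := by gcongr; exact hA ℓ hℓ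
      _ = |r| * A + |r| * (1 / (2 * m * (|r| + 1))) * ℓ := by ring
      _ ≤ |r| * A + 1 / (2 * m) * ℓ := by gcongr
      _ = |r| * A + ℓ / (2 * m) := by ring
  have hκ : 2 * (|r| * A) ≤ 2 * |(|r| * A)| / c * ℓ := by
    rw [div_mul_eq_mul_div, le_div_iff₀ hc]
    nlinarith [le_abs_self (|r| * A), abs_nonneg (|r| * A)]
  have hhalf : ℓ / m = 2 * (ℓ / (2 * m)) := by field_simp
  have hthree : 3 / (2 * m) * ℓ = 3 * (ℓ / (2 * m)) := by ring
  constructor <;> linarith [abs_le.mp hrlog]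

lemma exists_mul_rpow_neg_abs_le_rpow (q : ℝ) {a b : ℝ} (ha : 0 < a) (hb : 0 < b) :
    ∃ γ > 0, ∀ x w : ℝ, 0 ≤ w → (b * (1 + w))⁻¹ ≤ x → x ≤ a →
      γ * (1 + w) ^ (-|q|) ≤ x ^ q := by
  rcases le_or_gt 0 q with hq | hq
  · refine ⟨b ^ (-q), by positivity, fun x w hw hlow _ => ?_⟩
    calc b ^ (-q) * (1 + w) ^ (-|q|) = ((b * (1 + w))⁻¹) ^ q := by
          rw [abs_of_nonneg hq, ← mul_rpow hb.le (by linarith), rpow_neg (by positivity),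
            inv_rpow (by positivity)]
      _ ≤ x ^ q := rpow_le_rpow (by positivity) hlow hq
  · refine ⟨a ^ q, by positivity, fun x w hw hlow hup => ?_⟩
    have hx : 0 < x := lt_of_lt_of_le (by positivity) hlow
    calc a ^ q * (1 + w) ^ (-|q|) ≤ a ^ q * 1 := by
          gcongr
          exact rpow_le_one_of_one_le_of_nonpos (by linarith) (by simp)
      _ = a ^ q := mul_one _
      _ ≤ x ^ q := rpow_le_rpow_of_nonpos hx hup hq.le

lemma exists_le_add_mul_rpow_neg_mul_exp {k c m : ℝ} (hk : 0 ≤ k) (hc : 0 < c) (hm : 0 < m) :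
    ∃ A ≥ 0, ∀ v, 0 ≤ v → v ≤ A + c * (1 + v) ^ (-k) * exp (m * v) := by
  have hlittle : (fun v : ℝ => (1 + v) ^ (k + 1)) =o[atTop] fun v => exp (m * (1 + v)) :=
    (isLittleO_rpow_exp_pos_mul_atTop (k + 1) hm).comp_tendsto
      (tendsto_atTop_add_const_left _ 1 tendsto_id)
  obtain ⟨V, hV⟩ := eventually_atTop.mp
    (hlittle.bound (show 0 < c / exp m by positivity))
  have hpoly : ∀ v, 0 ≤ v → (1 + v) ^ (k + 1) ≤ (1 + max V 0) ^ (k + 1) + c * exp (m * v) := by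
    intro v hv
    rcases le_total V v with hVv | hvV
    · have h := hV v hVv
      rw [norm_of_nonneg (by positivity), norm_of_nonneg (by positivity), mul_add, mul_one,
        exp_add, div_mul_eq_mul_div, mul_div_assoc, mul_div_cancel_left₀ _ (exp_pos m).ne'] at h
      linarith [show 0 ≤ (1 + max V 0) ^ (k + 1) by positivity]
    · have h : (1 + v) ^ (k + 1) ≤ (1 + max V 0) ^ (k + 1) :=
        rpow_le_rpow (by linarith) (by linarith [le_max_left V 0]) (by linarith)
      linarith [show 0 ≤ c * exp (m * v) by positivity]
  refine ⟨(1 + max V 0) ^ (k + 1), by positivity, fun v hv => ?_⟩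
  have hsplit : 1 + v = (1 + v) ^ (k + 1) * (1 + v) ^ (-k) := by
    rw [← rpow_add (by linarith)]; simp
  have hshrink : (1 + v) ^ (-k) ≤ 1 :=
    rpow_le_one_of_one_le_of_nonpos (by linarith) (by linarith)
  calc v ≤ (1 + v) ^ (k + 1) * (1 + v) ^ (-k) := by linarith
    _ ≤ ((1 + max V 0) ^ (k + 1) + c * exp (m * v)) * (1 + v) ^ (-k) := by
        gcongr; exact hpoly v hv
    _ ≤ (1 + max V 0) ^ (k + 1) + c * (1 + v) ^ (-k) * exp (m * v) := by
        have : 0 ≤ (1 + max V 0) ^ (k + 1) := by positivity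
        nlinarith [mul_le_mul_of_nonneg_left hshrink this]

lemma exists_mul_sub_mul_exp_le {C m : ℝ} (hC : 0 < C) (hm : 0 < m) (r : ℝ) :
    ∃ κ, ∀ p, 2 ≤ p → ∀ u, 0 < u →
      p * u - C * exp (m * u) * u ^ (-(m * r)) ≤ p * (κ + (log p / m + r * log (log p))) := by
  have hlog2 : 0 < log 2 := log_pos one_lt_two
  obtain ⟨κ₀, β, hβ, hscale⟩ := exists_add_div_add_mul_log_mem_Icc hm hlog2 r
  obtain ⟨γ, hγ, hratio⟩ := exists_mul_rpow_neg_abs_le_rpow (m * r)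
    (show 0 < 2 * m by positivity) (show 0 < β + 1 / log 2 by positivity)
  obtain ⟨A, hA0, hA⟩ := exists_le_add_mul_rpow_neg_mul_exp (abs_nonneg (m * r))
    (show 0 < C * exp (m * κ₀) * γ by positivity) hm
  refine ⟨κ₀ + A, fun p hp u hu => ?_⟩
  have hp0 : 0 < p := by linarith
  set ℓ := log p with hℓ
  have hℓ2 : log 2 ≤ ℓ := log_le_log two_pos hp
  have hℓ0 : 0 < ℓ := hlog2.trans_le hℓ2
  obtain ⟨hlow, hup⟩ := hscale ℓ hℓ2
  set L := κ₀ + (ℓ / m + r * log ℓ) with hL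
  have hpenalty : 0 ≤ C * exp (m * u) * u ^ (-(m * r)) := by positivity
  rcases le_or_gt u L with huL | huL
  · nlinarith
  set v := u - L with hv
  have hv0 : 0 ≤ v := by linarith
  have hexp : exp (m * u) = exp (m * κ₀) * p * ℓ ^ (m * r) * exp (m * v) := by
    rw [rpow_def_of_pos hℓ0, ← exp_log hp0, ← exp_add, ← exp_add, ← exp_add, ← hℓ]
    congr 1
    rw [hv, hL]
    field_simp
    ring
  have hratio' : γ * (1 + v) ^ (-|m * r|) ≤ (ℓ / u) ^ (m * r) := by
    refine hratio _ _ hv0 ?_ ?_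
    · rw [inv_le_comm₀ (by positivity) (by positivity), inv_div, div_le_iff₀ hℓ0]
      have : v ≤ v * ℓ / log 2 := by
        rw [le_div_iff₀ hlog2]; exact mul_le_mul_of_nonneg_left hℓ2 hv0
      have hexpand : (β + 1 / log 2) * (1 + v) * ℓ =
          β * ℓ + β * v * ℓ + ℓ / log 2 + v * ℓ / log 2 := by
        ring
      have : 0 ≤ β * v * ℓ := by positivity
      have : 0 ≤ ℓ / log 2 := by positivity
      linarith
    · rw [div_le_iff₀ hu]
      have : ℓ = 2 * m * (ℓ / (2 * m)) := by field_simp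
      nlinarith
  have hpenalty' : p * (v - A) ≤ C * exp (m * u) * u ^ (-(m * r)) := by
    calc p * (v - A) ≤ p * (C * exp (m * κ₀) * (γ * (1 + v) ^ (-|m * r|)) * exp (m * v)) := by
          gcongr
          linarith [hA v hv0]
      _ ≤ p * (C * exp (m * κ₀) * (ℓ / u) ^ (m * r) * exp (m * v)) := by gcongr
      _ = C * exp (m * u) * u ^ (-(m * r)) := by
          rw [hexp, div_rpow hℓ0.le hu.le, rpow_neg hu.le]
          field_simp
  nlinarith

lemma rpow_one_div_mul_log_rpow_eq_exp {p : ℝ} (hp : 1 < p) (m r : ℝ) :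
    p ^ (1 / m) * log p ^ r = exp (log p / m + r * log (log p)) := by
  rw [rpow_def_of_pos (by linarith), rpow_def_of_pos (log_pos hp), ← exp_add]
  ring_nf

lemma exists_rpow_mul_exp_neg_half_le {C m : ℝ} (hC : 0 < C) (hm : 0 < m) (r : ℝ) :
    ∃ K > 0, ∀ p, 2 ≤ p → ∀ t, 1 < t →
      t ^ p * exp (-(C * t ^ m * log t ^ (-(m * r))) / 2) ≤ (K * p ^ (1 / m) * log p ^ r) ^ p := by
  obtain ⟨κ, hκ⟩ := exists_mul_sub_mul_exp_le (half_pos hC) hm r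
  refine ⟨exp κ, exp_pos κ, fun p hp t ht => ?_⟩
  have h := hκ p hp (log t) (log_pos ht)
  rw [mul_assoc (exp κ), rpow_one_div_mul_log_rpow_eq_exp (by linarith), ← exp_add,
    rpow_def_of_pos (exp_pos _), log_exp, rpow_def_of_pos (by linarith : 0 < t),
    rpow_def_of_pos (by linarith : 0 < t), ← exp_add]
  refine exp_le_exp.mpr ?_
  rw [mul_comm (log t) m]
  linarith

lemma exists_pos_le_rpow_one_div_mul_log_rpow {m : ℝ} (hm : 0 < m) (r : ℝ) :
    ∃ ε > 0, ∀ p, 2 ≤ p → ε ≤ p ^ (1 / m) * log p ^ r := by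
  obtain ⟨κ, _, -, hscale⟩ := exists_add_div_add_mul_log_mem_Icc hm (log_pos one_lt_two) r
  refine ⟨exp (-κ), exp_pos _, fun p hp => ?_⟩
  rw [rpow_one_div_mul_log_rpow_eq_exp (by linarith)]
  have hlow := (hscale (log p) (log_le_log two_pos hp)).1
  have : 0 ≤ log p / (2 * m) := div_nonneg (log_nonneg (by linarith)) (by positivity)
  exact exp_le_exp.mpr (by linarith)

lemma exp_neg_mul_rpow_sub_one_le {φ t p A B : ℝ} (ht : 0 < t)
    (hA : t ^ p * exp (-φ / 2) ≤ A) (hB : t ^ (2 : ℝ) * exp (-φ / 2) ≤ B) :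
    exp (-φ) * t ^ (p - 1) ≤ A * B * t ^ (-3 : ℝ) := by
  have hsplit : exp (-φ) * t ^ (p - 1) =
      t ^ p * exp (-φ / 2) * (t ^ (2 : ℝ) * exp (-φ / 2)) * t ^ (-3 : ℝ) := by
    rw [show p - 1 = p + 2 + -3 by ring, rpow_add ht, rpow_add ht,
      show -φ = -φ / 2 + -φ / 2 by ring, exp_add]
    ring_nf
  rw [hsplit]
  gcongr
  exact (by positivity : (0:ℝ) ≤ _).trans hA

lemma mul_mul_rpow_le_rpow {p B X : ℝ} (hp : 1 ≤ p) (hB : 0 ≤ B) (hX : 0 ≤ X) :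
    p * B * X ^ p ≤ (2 * max B 1 * X) ^ p := by
  have hp2 : p ≤ 2 ^ p := by
    have := one_add_mul_self_le_rpow_one_add (show (-1 : ℝ) ≤ 1 by norm_num) hp
    norm_num at this
    linarith
  have hBp : B ≤ max B 1 ^ p :=
    (le_max_left B 1).trans (self_le_rpow_of_one_le (le_max_right B 1) hp)
  rw [mul_rpow (by positivity) hX, mul_rpow (by norm_num) (by positivity)]
  gcongr

lemma lintegral_Ioc_zero_ofReal_rpow_sub_one {p a : ℝ} (hp : 0 < p) (ha : 0 ≤ a) :
    ∫⁻ t in Ioc 0 a, ENNReal.ofReal (t ^ (p - 1)) = ENNReal.ofReal (a ^ p / p) := by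
  have hint : IntegrableOn (fun t : ℝ => t ^ (p - 1)) (Ioc 0 a) :=
    (intervalIntegrable_iff_integrableOn_Ioc_of_le ha).mp
      (intervalIntegral.intervalIntegrable_rpow' (by linarith))
  rw [← ofReal_integral_eq_lintegral_ofReal hint
      ((ae_restrict_iff' measurableSet_Ioc).mpr (ae_of_all _ fun t ht => rpow_nonneg ht.1.le _)),
    ← intervalIntegral.integral_of_le ha, integral_rpow (Or.inl (by linarith))]
  simp [zero_rpow hp.ne']

lemma integral_rpow_abs_le_of_tail {Ω : Type*} [MeasurableSpace Ω] {μ : Measure Ω}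
    [IsProbabilityMeasure μ] {X : Ω → ℝ} (hX : AEMeasurable X μ) {p a : ℝ} {f : ℝ → ℝ}
    (hp : 0 < p) (ha : 0 ≤ a) (hf : IntegrableOn f (Ioi a)) (hf0 : ∀ t ∈ Ioi a, 0 ≤ f t)
    (htail : ∀ t ∈ Ioi a, μ.real {ω | t < |X ω|} * t ^ (p - 1) ≤ f t) :
    ∫ ω, |X ω| ^ p ∂μ ≤ a ^ p + p * ∫ t in Ioi a, f t := by
  set g : ℝ → ℝ≥0∞ := fun t => μ {ω | t < |X ω|} * ENNReal.ofReal (t ^ (p - 1))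
  have hnear : ∫⁻ t in Ioc 0 a, g t ≤ ENNReal.ofReal (a ^ p / p) := by
    rw [← lintegral_Ioc_zero_ofReal_rpow_sub_one hp ha]
    exact lintegral_mono fun t => mul_le_of_le_one_left (by positivity) prob_le_one
  have hfar : ∫⁻ t in Ioi a, g t ≤ ENNReal.ofReal (∫ t in Ioi a, f t) := by
    rw [ofReal_integral_eq_lintegral_ofReal hf ((ae_restrict_iff' measurableSet_Ioi).mpr
      (ae_of_all _ hf0))]
    refine setLIntegral_mono' measurableSet_Ioi fun t ht => ?_
    change μ _ * _ ≤ _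
    rw [← ofReal_measureReal (measure_ne_top μ _), ← ENNReal.ofReal_mul measureReal_nonneg]
    exact ENNReal.ofReal_le_ofReal (htail t ht)
  have hlayer : ∫⁻ ω, ENNReal.ofReal (|X ω| ^ p) ∂μ ≤
      ENNReal.ofReal (a ^ p + p * ∫ t in Ioi a, f t) := by
    rw [lintegral_rpow_eq_lintegral_meas_lt_mul μ (ae_of_all _ fun ω => abs_nonneg (X ω))
      hX.abs hp, ← Ioc_union_Ioi_eq_Ioi ha,
      lintegral_union measurableSet_Ioi (Ioc_disjoint_Ioi le_rfl)]
    calc ENNReal.ofReal p * ((∫⁻ t in Ioc 0 a, g t) + ∫⁻ t in Ioi a, g t)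
        ≤ ENNReal.ofReal p * (ENNReal.ofReal (a ^ p / p) + ENNReal.ofReal (∫ t in Ioi a, f t)) := by
          gcongr
      _ = ENNReal.ofReal (a ^ p + p * ∫ t in Ioi a, f t) := by
          rw [← ENNReal.ofReal_add (by positivity) (setIntegral_nonneg measurableSet_Ioi hf0),
            ← ENNReal.ofReal_mul hp.le, mul_add, mul_div_cancel₀ _ hp.ne']
  rw [integral_eq_lintegral_of_nonneg_ae (ae_of_all _ fun ω => by positivity)
    (hX.abs.pow_const p).aestronglyMeasurable]
  exact ENNReal.toReal_le_of_le_ofReal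
    (add_nonneg (by positivity) (mul_nonneg hp.le (setIntegral_nonneg measurableSet_Ioi hf0)))
    hlayer

lemma measureReal_lt_abs_le_two_mul_tailFun {Ω : Type*} [MeasurableSpace Ω] (μ : Measure Ω)
    [IsFiniteMeasure μ] (ξ : Ω → ℝ) (t : ℝ) :
    μ.real {ω | t < |ξ ω|} ≤ 2 * tailFun μ ξ t := by
  have hsub : {ω | t < |ξ ω|} ⊆ {ω | t < ξ ω} ∪ {ω | ξ ω < -t} := fun ω (hω : t < |ξ ω|) => by
    rcases lt_abs.mp hω with h | h
    · exact Or.inl h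
    · exact Or.inr (show ξ ω < -t by linarith)
  calc μ.real {ω | t < |ξ ω|} ≤ μ.real {ω | t < ξ ω} + μ.real {ω | ξ ω < -t} :=
        (measureReal_mono hsub).trans (measureReal_union_le _ _)
    _ ≤ 2 * tailFun μ ξ t := by
        have h₁ := le_max_left (μ.real {ω | t < ξ ω}) (μ.real {ω | ξ ω < -t})
        have h₂ := le_max_right (μ.real {ω | t < ξ ω}) (μ.real {ω | ξ ω < -t})
        unfold tailFun
        simp only [measureReal_def] at h₁ h₂ ⊢
        linarith

lemma integral_rpow_abs_le_of_tailFun_le {Ω : Type*} [MeasurableSpace Ω] {μ : Measure Ω}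
    [IsProbabilityMeasure μ] {ξ : Ω → ℝ} (hξ : AEMeasurable ξ μ) {φ : ℝ → ℝ} {a p A B : ℝ}
    (ha : 0 < a) (hp : 0 < p) (htail : ∀ t, a < t → tailFun μ ξ t ≤ exp (-φ t))
    (hA : ∀ t, a < t → t ^ p * exp (-φ t / 2) ≤ A)
    (hB : ∀ t, a < t → t ^ (2 : ℝ) * exp (-φ t / 2) ≤ B) :
    ∫ ω, |ξ ω| ^ p ∂μ ≤ a ^ p + p * (B * a ^ (-2 : ℝ)) * A := by
  have hA0 : 0 ≤ A := le_trans (by positivity) (hA (a + 1) (by linarith))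
  have hB0 : 0 ≤ B := le_trans (by positivity) (hB (a + 1) (by linarith))
  calc ∫ ω, |ξ ω| ^ p ∂μ ≤ a ^ p + p * ∫ t in Ioi a, 2 * (A * B) * t ^ (-3 : ℝ) := by
        refine integral_rpow_abs_le_of_tail hξ hp ha.le
          ((integrableOn_Ioi_rpow_of_lt (by norm_num) ha).const_mul _)
          (fun t (ht : a < t) => by have := ha.trans ht; positivity) (fun t ht => ?_)
        have ht0 : 0 < t := ha.trans ht
        calc μ.real {ω | t < |ξ ω|} * t ^ (p - 1) ≤ 2 * exp (-φ t) * t ^ (p - 1) :=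
              mul_le_mul_of_nonneg_right ((measureReal_lt_abs_le_two_mul_tailFun μ ξ t).trans
                (mul_le_mul_of_nonneg_left (htail t ht) two_pos.le)) (by positivity)
          _ ≤ 2 * (A * B) * t ^ (-3 : ℝ) := by
              rw [mul_assoc, mul_assoc 2]
              exact mul_le_mul_of_nonneg_left
                (exp_neg_mul_rpow_sub_one_le ht0 (hA t ht) (hB t ht)) two_pos.le
    _ = a ^ p + p * (B * a ^ (-2 : ℝ)) * A := by
        rw [integral_const_mul, integral_Ioi_rpow_of_lt (by norm_num) ha]
        ring_nf

lemma lpNorm_le_add_of_integral_le {Ω : Type*} [MeasurableSpace Ω] {μ : Measure Ω}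
    {X : Ω → ℝ} {p x y : ℝ} (hp : 1 ≤ p) (hx : 0 ≤ x) (hy : 0 ≤ y)
    (h : ∫ ω, |X ω| ^ p ∂μ ≤ x ^ p + y ^ p) : lpNorm μ X p ≤ x + y :=
  (rpow_le_rpow (integral_nonneg fun ω => by positivity) h (by positivity)).trans
    (rpow_add_rpow_le_add hx hy hp)

theorem tail_implies_moment_growth
    {Ω : Type*} [MeasurableSpace Ω] (μ : Measure Ω) [IsProbabilityMeasure μ]
    (ξ : Ω → ℝ) (hξ : Measurable ξ)
    (C₂ m r : ℝ) (hC₂ : 0 < C₂) (hm : 0 < m)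
    (htail : ∀ x : ℝ, Real.exp 1 < x →
      tailFun μ ξ x ≤ Real.exp (-(C₂ * x ^ m * Real.log x ^ (-(m * r))))) :
    ∃ C₁ : ℝ, 0 < C₁ ∧ ∀ p : ℝ, 2 ≤ p →
      lpNorm μ ξ p ≤ C₁ * p ^ (1 / m) * Real.log p ^ r := by
  obtain ⟨K, hK, hkey⟩ := exists_rpow_mul_exp_neg_half_le hC₂ hm r
  obtain ⟨ε, hε, hεle⟩ := exists_pos_le_rpow_one_div_mul_log_rpow hm r
  set D : ℝ → ℝ := fun p => K * p ^ (1 / m) * log p ^ r with hD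
  set B := D 2 ^ (2 : ℝ) * exp 1 ^ (-2 : ℝ)
  refine ⟨exp 1 / ε + 2 * max B 1 * K, by positivity, fun p hp => ?_⟩
  have hlogp : 0 < log p := log_pos (by linarith)
  have hDp : 0 ≤ D p := by positivity
  have he1 : ∀ t, exp 1 < t → 1 < t := fun t ht => (one_lt_exp_iff.mpr one_pos).trans ht
  have hmoment : ∫ ω, |ξ ω| ^ p ∂μ ≤ exp 1 ^ p + (2 * max B 1 * D p) ^ p :=
    (integral_rpow_abs_le_of_tailFun_le hξ.aemeasurable (exp_pos 1) (by linarith) htail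
      (fun t ht => hkey p hp t (he1 t ht)) (fun t ht => hkey 2 le_rfl t (he1 t ht))).trans
      (by gcongr; exact mul_mul_rpow_le_rpow (by linarith) (by positivity) hDp)
  have hscale : exp 1 ≤ exp 1 / ε * (p ^ (1 / m) * log p ^ r) := by
    rw [div_mul_eq_mul_div, le_div_iff₀ hε]
    exact mul_le_mul_of_nonneg_left (hεle p hp) (exp_pos 1).le
  calc lpNorm μ ξ p ≤ exp 1 + 2 * max B 1 * D p :=
        lpNorm_le_add_of_integral_le (by linarith) (exp_pos 1).le (by positivity) hmoment
    _ ≤ (exp 1 / ε + 2 * max B 1 * K) * p ^ (1 / m) * log p ^ r := by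
        simp only [hD]
        linarith
end

section
/- Let ξ be a random variable with T_ξ(x) ≤ exp(−C₄ (ln(1+x))^{1+1/β}) for all x ≥ 0, where C₄ > 0, β > 0. Then there exists C₃ = C₃(C₄, β) > 0 with |ξ|_p ≤ exp(C₃ p^β) for all p ≥ 2. -/
open MeasureTheory

theorem tail_implies_stretched_exp_moment
    {Ω : Type*} [MeasurableSpace Ω] (μ : Measure Ω) [IsProbabilityMeasure μ]
    (ξ : Ω → ℝ) (hξ : Measurable ξ)
    (C₄ β : ℝ) (hC₄ : 0 < C₄) (hβ : 0 < β)
    (htail : ∀ x : ℝ, 0 ≤ x →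
      tailFun μ ξ x ≤ Real.exp (-(C₄ * Real.log (1 + x) ^ (1 + 1 / β)))) :
    ∃ C₃ : ℝ, 0 < C₃ ∧ ∀ p : ℝ, 2 ≤ p →
      lpNorm μ ξ p ≤ Real.exp (C₃ * p ^ β) := by
  classical
  set c : ℝ := max 1 ((2 / C₄) ^ β) with hc_def
  have hc1 : (1 : ℝ) ≤ c := le_max_left _ _
  have hc0 : (0 : ℝ) < c := lt_of_lt_of_le one_pos hc1
  -- 2 ≤ C₄ * c^(1/β)
  have hc2 : 2 ≤ C₄ * c ^ (1 / β) := by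
    have h2C : (0 : ℝ) < 2 / C₄ := div_pos two_pos hC₄
    have h1 : ((2 / C₄) ^ β) ^ (1 / β) ≤ c ^ (1 / β) :=
      Real.rpow_le_rpow (Real.rpow_nonneg h2C.le _) (le_max_right _ _)
        (by positivity)
    have h2 : ((2 / C₄) ^ β) ^ (1 / β) = 2 / C₄ := by
      rw [← Real.rpow_mul h2C.le, mul_one_div, div_self hβ.ne', Real.rpow_one]
    rw [h2] at h1
    rw [mul_comm]
    calc (2 : ℝ) = (2 / C₄) * C₄ := by field_simp
    _ ≤ c ^ (1 / β) * C₄ := by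
        exact mul_le_mul_of_nonneg_right h1 hC₄.le
  refine ⟨c + 2, by positivity, ?_⟩
  intro p hp2
  have hp1 : (1 : ℝ) ≤ p := by linarith
  have hp0 : (0 : ℝ) < p := by linarith
  have hpβ : (1 : ℝ) ≤ p ^ β := Real.one_le_rpow hp1 hβ.le
  set M : ℝ := Real.exp (c * p ^ β) with hM_def
  have hcp1 : (1 : ℝ) ≤ c * p ^ β := by nlinarith
  have hM1 : (1 : ℝ) < M := by
    rw [hM_def]
    calc (1 : ℝ) < Real.exp 1 := by
          have := Real.exp_one_gt_d9; linarith
    _ ≤ M := Real.exp_le_exp.mpr hcp1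
  have hM0 : (0 : ℝ) < M := lt_trans one_pos hM1
  have hlogM : Real.log M = c * p ^ β := Real.log_exp _
  -- tail bound on the measure
  have tailmeas : ∀ t : ℝ, 0 ≤ t →
      μ {a | t < |ξ a|} ≤
        ENNReal.ofReal (2 * Real.exp (-(C₄ * Real.log (1 + t) ^ (1 + 1 / β)))) := by
    intro t ht
    have hsub : {a | t < |ξ a|} ⊆ {a | t < ξ a} ∪ {a | ξ a < -t} := by
      intro a ha
      simp only [Set.mem_setOf_eq, Set.mem_union] at ha ⊢
      rcases lt_abs.mp ha with h | h
      · exact Or.inl h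
      · exact Or.inr (by linarith)
    have h1 : μ {a | t < ξ a} ≤
        ENNReal.ofReal (Real.exp (-(C₄ * Real.log (1 + t) ^ (1 + 1 / β)))) := by
      rw [← ENNReal.ofReal_toReal (measure_ne_top μ _)]
      exact ENNReal.ofReal_le_ofReal ((le_max_left _ _).trans (htail t ht))
    have h2 : μ {a | ξ a < -t} ≤
        ENNReal.ofReal (Real.exp (-(C₄ * Real.log (1 + t) ^ (1 + 1 / β)))) := by
      rw [← ENNReal.ofReal_toReal (measure_ne_top μ _)]
      exact ENNReal.ofReal_le_ofReal ((le_max_right _ _).trans (htail t ht))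
    calc μ {a | t < |ξ a|} ≤ μ ({a | t < ξ a} ∪ {a | ξ a < -t}) := measure_mono hsub
    _ ≤ μ {a | t < ξ a} + μ {a | ξ a < -t} := measure_union_le _ _
    _ ≤ ENNReal.ofReal (Real.exp (-(C₄ * Real.log (1 + t) ^ (1 + 1 / β)))) +
        ENNReal.ofReal (Real.exp (-(C₄ * Real.log (1 + t) ^ (1 + 1 / β)))) :=
          add_le_add h1 h2
    _ = ENNReal.ofReal (2 * Real.exp (-(C₄ * Real.log (1 + t) ^ (1 + 1 / β)))) := by
          rw [← ENNReal.ofReal_add (Real.exp_nonneg _) (Real.exp_nonneg _)]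
          congr 1
          ring
  -- pointwise bound on (M, ∞)
  have hptB : ∀ t ∈ Set.Ioi M,
      μ {a | t < |ξ a|} * ENNReal.ofReal (t ^ (p - 1)) ≤ ENNReal.ofReal (2 * t ^ (-2 : ℝ)) := by
    intro t htM
    rw [Set.mem_Ioi] at htM
    have ht1 : 1 < t := lt_trans hM1 htM
    have ht0 : (0 : ℝ) < t := lt_trans one_pos ht1
    have hlogt0 : 0 ≤ Real.log t := Real.log_nonneg ht1.le
    set L := Real.log (1 + t) with hL_def
    have hlt : Real.log t ≤ L := Real.log_le_log ht0 (by linarith)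
    have hML : c * p ^ β ≤ Real.log t := by
      rw [← hlogM]; exact Real.log_le_log hM0 htM.le
    have hL0 : (0 : ℝ) < L := lt_of_lt_of_le (lt_of_lt_of_le (by positivity) hML) hlt
    have hA : c ^ (1 / β) * p ≤ L ^ (1 / β) := by
      have h1 : (c * p ^ β) ^ (1 / β) ≤ L ^ (1 / β) :=
        Real.rpow_le_rpow (by positivity) (hML.trans hlt) (by positivity)
      have h2 : (c * p ^ β) ^ (1 / β) = c ^ (1 / β) * p := by
        rw [Real.mul_rpow hc0.le (by positivity), ← Real.rpow_mul hp0.le,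
          mul_one_div, div_self hβ.ne', Real.rpow_one]
      rwa [h2] at h1
    have hkey : (p + 1) * Real.log t ≤ C₄ * L ^ (1 + 1 / β) := by
      have hexp : L ^ (1 + 1 / β) = L * L ^ (1 / β) := by
        rw [Real.rpow_add hL0, Real.rpow_one]
      rw [hexp]
      have hc2p : 2 * p ≤ C₄ * c ^ (1 / β) * p := by nlinarith
      have hstep : C₄ * c ^ (1 / β) * p * L ≤ C₄ * (L * L ^ (1 / β)) := by
        nlinarith [mul_le_mul_of_nonneg_left hA (mul_nonneg hC₄.le hL0.le)]
      have hLlb : Real.log t ≤ L := hlt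
      nlinarith
    have hreal : 2 * Real.exp (-(C₄ * L ^ (1 + 1 / β))) * t ^ (p - 1) ≤ 2 * t ^ (-2 : ℝ) := by
      rw [Real.rpow_def_of_pos ht0, Real.rpow_def_of_pos ht0, mul_assoc, ← Real.exp_add]
      have h : -(C₄ * L ^ (1 + 1 / β)) + Real.log t * (p - 1) ≤ Real.log t * (-2) := by
        nlinarith
      exact mul_le_mul_of_nonneg_left (Real.exp_le_exp.mpr h) (by norm_num)
    calc μ {a | t < |ξ a|} * ENNReal.ofReal (t ^ (p - 1))
        ≤ ENNReal.ofReal (2 * Real.exp (-(C₄ * L ^ (1 + 1 / β)))) *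
            ENNReal.ofReal (t ^ (p - 1)) := mul_le_mul' (tailmeas t ht0.le) le_rfl
      _ = ENNReal.ofReal (2 * Real.exp (-(C₄ * L ^ (1 + 1 / β))) * t ^ (p - 1)) :=
          (ENNReal.ofReal_mul (by positivity)).symm
      _ ≤ ENNReal.ofReal (2 * t ^ (-2 : ℝ)) := ENNReal.ofReal_le_ofReal hreal
  -- part A integral
  have hA_int : ∫⁻ t in Set.Ioc 0 M, ENNReal.ofReal (t ^ (p - 1)) =
      ENNReal.ofReal (M ^ p / p) := by
    have hio : IntegrableOn (fun t : ℝ => t ^ (p - 1)) (Set.Ioc 0 M) := by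
      rw [← intervalIntegrable_iff_integrableOn_Ioc_of_le hM0.le]
      exact intervalIntegral.intervalIntegrable_rpow' (by linarith)
    have hnn : 0 ≤ᵐ[volume.restrict (Set.Ioc 0 M)] fun t : ℝ => t ^ (p - 1) :=
      ae_restrict_of_forall_mem measurableSet_Ioc fun t ht => Real.rpow_nonneg ht.1.le _
    rw [← ofReal_integral_eq_lintegral_ofReal hio hnn]
    congr 1
    rw [← intervalIntegral.integral_of_le hM0.le,
      integral_rpow (Or.inl (by linarith : (-1 : ℝ) < p - 1))]
    have hpe : p - 1 + 1 = p := by ring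
    rw [hpe, Real.zero_rpow hp0.ne', sub_zero]
  -- part B integral
  have hB_int : ∫⁻ t in Set.Ioi M, ENNReal.ofReal (2 * t ^ (-2 : ℝ)) ≤ ENNReal.ofReal 2 := by
    have hio : IntegrableOn (fun t : ℝ => 2 * t ^ (-2 : ℝ)) (Set.Ioi M) :=
      (integrableOn_Ioi_rpow_of_lt (by norm_num) hM0).const_mul 2
    have hnn : 0 ≤ᵐ[volume.restrict (Set.Ioi M)] fun t : ℝ => 2 * t ^ (-2 : ℝ) :=
      ae_restrict_of_forall_mem measurableSet_Ioi fun t ht =>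
        mul_nonneg (by norm_num) (Real.rpow_nonneg (le_of_lt (lt_trans hM0 ht)) _)
    rw [← ofReal_integral_eq_lintegral_ofReal hio hnn]
    apply ENNReal.ofReal_le_ofReal
    rw [MeasureTheory.integral_const_mul, integral_Ioi_rpow_of_lt (by norm_num) hM0]
    have h1 : (-2 : ℝ) + 1 = -1 := by norm_num
    rw [h1, Real.rpow_neg_one]
    have h2 : M⁻¹ ≤ 1 := inv_le_one_of_one_le₀ hM1.le
    have h3 : (0:ℝ) < M⁻¹ := by positivity
    have : -M⁻¹ / (-1 : ℝ) = M⁻¹ := by ring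
    rw [this]; linarith
  -- layer-cake combination
  have habs_nn : 0 ≤ᵐ[μ] fun ω => |ξ ω| := Filter.Eventually.of_forall fun ω => abs_nonneg _
  have habs_m : AEMeasurable (fun ω => |ξ ω|) μ := hξ.abs.aemeasurable
  have hmeas1 : Measurable fun t : ℝ => ENNReal.ofReal (t ^ (p - 1)) := by fun_prop
  have hmeas2 : Measurable fun t : ℝ => ENNReal.ofReal (2 * t ^ (-2 : ℝ)) := by fun_prop
  have key : ∫⁻ ω, ENNReal.ofReal (|ξ ω| ^ p) ∂μ ≤ ENNReal.ofReal (M ^ p + 2 * p) := by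
    rw [lintegral_rpow_eq_lintegral_meas_lt_mul μ habs_nn habs_m hp0]
    have hsplit : (Set.Ioi (0 : ℝ)) = Set.Ioc 0 M ∪ Set.Ioi M :=
      (Set.Ioc_union_Ioi_eq_Ioi hM0.le).symm
    rw [hsplit, lintegral_union measurableSet_Ioi (Set.Ioc_disjoint_Ioi le_rfl)]
    have hIA : ∫⁻ t in Set.Ioc 0 M, μ {a | t < |ξ a|} * ENNReal.ofReal (t ^ (p - 1)) ≤
        ENNReal.ofReal (M ^ p / p) := by
      rw [← hA_int]
      refine setLIntegral_mono hmeas1 fun t _ => ?_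
      calc μ {a | t < |ξ a|} * ENNReal.ofReal (t ^ (p - 1))
          ≤ 1 * ENNReal.ofReal (t ^ (p - 1)) := mul_le_mul' prob_le_one le_rfl
        _ = ENNReal.ofReal (t ^ (p - 1)) := one_mul _
    have hIB : ∫⁻ t in Set.Ioi M, μ {a | t < |ξ a|} * ENNReal.ofReal (t ^ (p - 1)) ≤
        ENNReal.ofReal 2 :=
      le_trans (setLIntegral_mono hmeas2 hptB) hB_int
    calc ENNReal.ofReal p *
        ((∫⁻ t in Set.Ioc 0 M, μ {a | t < |ξ a|} * ENNReal.ofReal (t ^ (p - 1))) +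
          ∫⁻ t in Set.Ioi M, μ {a | t < |ξ a|} * ENNReal.ofReal (t ^ (p - 1)))
        ≤ ENNReal.ofReal p * (ENNReal.ofReal (M ^ p / p) + ENNReal.ofReal 2) := by
          exact mul_le_mul' le_rfl (add_le_add hIA hIB)
      _ = ENNReal.ofReal (p * (M ^ p / p + 2)) := by
          rw [← ENNReal.ofReal_add (by positivity) (by norm_num),
            ← ENNReal.ofReal_mul hp0.le]
      _ = ENNReal.ofReal (M ^ p + 2 * p) := by
          rw [mul_add, mul_div_cancel₀ _ hp0.ne']; ring_nf
  -- from lintegral to integral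
  have hint_eq : ∫ ω, |ξ ω| ^ p ∂μ = (∫⁻ ω, ENNReal.ofReal (|ξ ω| ^ p) ∂μ).toReal := by
    rw [integral_eq_lintegral_of_nonneg_ae
      (Filter.Eventually.of_forall fun ω => Real.rpow_nonneg (abs_nonneg _) _)
      ((by fun_prop : Measurable fun ω => |ξ ω| ^ p).aestronglyMeasurable)]
  have hintle : ∫ ω, |ξ ω| ^ p ∂μ ≤ M ^ p + 2 * p := by
    rw [hint_eq]
    exact ENNReal.toReal_le_of_le_ofReal (by positivity) key
  have hMp : M ^ p = Real.exp (c * p ^ β * p) := (Real.exp_mul _ _).symm ▸ rfl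
  have hbound2 : M ^ p + 2 * p ≤ Real.exp ((c * p ^ β + 2) * p) := by
    have hMp' : M ^ p = Real.exp (c * p ^ β * p) := by
      rw [hM_def, ← Real.exp_mul]
    rw [hMp']
    have h1 : Real.exp ((c * p ^ β + 2) * p) =
        Real.exp (c * p ^ β * p) * Real.exp (2 * p) := by
      rw [← Real.exp_add]; ring_nf
    rw [h1]
    have h2 : (1 : ℝ) + 2 * p ≤ Real.exp (2 * p) := by
      have := Real.add_one_le_exp (2 * p); linarith
    have h3 : (1 : ℝ) ≤ Real.exp (c * p ^ β * p) := Real.one_le_exp (by positivity)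
    nlinarith
  have hnn' : 0 ≤ ∫ ω, |ξ ω| ^ p ∂μ :=
    integral_nonneg fun ω => Real.rpow_nonneg (abs_nonneg _) _
  show (∫ ω, |ξ ω| ^ p ∂μ) ^ (1 / p) ≤ Real.exp ((c + 2) * p ^ β)
  calc (∫ ω, |ξ ω| ^ p ∂μ) ^ (1 / p)
      ≤ (Real.exp ((c * p ^ β + 2) * p)) ^ (1 / p) :=
        Real.rpow_le_rpow hnn' (le_trans hintle hbound2) (by positivity)
    _ = Real.exp (c * p ^ β + 2) := by
        rw [← Real.exp_mul]
        congr 1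
        field_simp
    _ ≤ Real.exp ((c + 2) * p ^ β) := by
        apply Real.exp_le_exp.mpr
        nlinarith
end
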